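/- arXiv:0710.2124 — 2 statements merged into one kernel-verified Lean document; each statement's English description precedes it below -/
import Mathlib

section
/- Let Y be a real symmetric positive-definite g×g matrix, M = g(g+1)/2, and define the M×M matrix g^S_{ij} := 2 χ_i⁻¹ χ_j⁻¹ ( (Y⁻¹·Y⁻¹)_{ij} ) with the symmetric-pair indexing and χ as above. Then det g^S = 2^{M-g} / (det Y)^{g+1}. -/
open Finset

namespace SiegelDetAux

variable {g M : ℕ}

/-- The symmetric-square matrix of `A` in the pair basis. -/
noncomputable def Pm (f1 f2 : Fin M → Fin g) (A : Matrix (Fin g) (Fin g) ℝ) : Matrix (Fin M) (Fin M) ℝ :=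
  Matrix.of fun i j => (if f1 i = f2 i then (2:ℝ)⁻¹ else 1) *
    (A (f1 i) (f1 j) * A (f2 i) (f2 j) + A (f1 i) (f2 j) * A (f2 i) (f1 j))

section

variable (f1 f2 : Fin M → Fin g)

theorem prod_pairs
    (hle : ∀ i, f1 i ≤ f2 i)
    (hinj : Function.Injective (fun i => ((f1 i, f2 i) : Fin g × Fin g)))
    (hsurj : ∀ p : Fin g × Fin g, p.1 ≤ p.2 → ∃ i, f1 i = p.1 ∧ f2 i = p.2)
    {β : Type*} [CommMonoid β] (h : Fin g → Fin g → β) :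
    ∏ k : Fin M, h (f1 k) (f2 k)
      = ∏ p ∈ Finset.univ.filter (fun p : Fin g × Fin g => p.1 ≤ p.2), h p.1 p.2 := by
  refine Finset.prod_nbij (fun k => (f1 k, f2 k)) (fun k _ => ?_) ?_ ?_ (fun k _ => rfl)
  · simp [hle k]
  · exact fun a _ b _ hab => hinj hab
  · intro p hp
    simp only [coe_filter, Set.mem_setOf_eq, mem_univ, true_and] at hp
    obtain ⟨i, h1, h2⟩ := hsurj p hp
    exact ⟨i, by simp, by simp [h1, h2]⟩

theorem sum_pairs
    (hle : ∀ i, f1 i ≤ f2 i)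
    (hinj : Function.Injective (fun i => ((f1 i, f2 i) : Fin g × Fin g)))
    (hsurj : ∀ p : Fin g × Fin g, p.1 ≤ p.2 → ∃ i, f1 i = p.1 ∧ f2 i = p.2)
    {β : Type*} [AddCommMonoid β] (h : Fin g → Fin g → β) :
    ∑ k : Fin M, h (f1 k) (f2 k)
      = ∑ p ∈ Finset.univ.filter (fun p : Fin g × Fin g => p.1 ≤ p.2), h p.1 p.2 := by
  refine Finset.sum_nbij (fun k => (f1 k, f2 k)) (fun k _ => ?_) ?_ ?_ (fun k _ => rfl)
  · simp [hle k]
  · exact fun a _ b _ hab => hinj hab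
  · intro p hp
    simp only [coe_filter, Set.mem_setOf_eq, mem_univ, true_and] at hp
    obtain ⟨i, h1, h2⟩ := hsurj p hp
    exact ⟨i, by simp, by simp [h1, h2]⟩

theorem sum_sym (F : Fin g → Fin g → ℝ) :
    ∑ p ∈ Finset.univ.filter (fun p : Fin g × Fin g => p.1 ≤ p.2),
      ((if p.1 = p.2 then (2:ℝ)⁻¹ else 1) * (F p.1 p.2 + F p.2 p.1))
    = ∑ p : Fin g × Fin g, F p.1 p.2 := by
  have hsplit : Finset.univ.filter (fun p : Fin g × Fin g => p.1 ≤ p.2)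
      = Finset.univ.filter (fun p : Fin g × Fin g => p.1 = p.2)
        ∪ Finset.univ.filter (fun p : Fin g × Fin g => p.1 < p.2) := by
    ext p
    simp [le_iff_lt_or_eq, or_comm]
  have hdisj : Disjoint (Finset.univ.filter (fun p : Fin g × Fin g => p.1 = p.2))
      (Finset.univ.filter (fun p : Fin g × Fin g => p.1 < p.2)) := by
    rw [Finset.disjoint_filter]
    intro p _ h
    simp [h]
  have hsplit2 : (Finset.univ : Finset (Fin g × Fin g))
      = Finset.univ.filter (fun p : Fin g × Fin g => p.1 ≤ p.2)
        ∪ Finset.univ.filter (fun p : Fin g × Fin g => p.2 < p.1) := by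
    ext p
    simp [le_or_gt]
  have hdisj2 : Disjoint (Finset.univ.filter (fun p : Fin g × Fin g => p.1 ≤ p.2))
      (Finset.univ.filter (fun p : Fin g × Fin g => p.2 < p.1)) := by
    rw [Finset.disjoint_filter]
    intro p _ h
    simp [not_lt, h]
  have hswap : ∑ p ∈ Finset.univ.filter (fun p : Fin g × Fin g => p.2 < p.1), F p.1 p.2
      = ∑ p ∈ Finset.univ.filter (fun p : Fin g × Fin g => p.1 < p.2), F p.2 p.1 := by
    refine Finset.sum_nbij' Prod.swap Prod.swap ?_ ?_ ?_ ?_ ?_ <;> simp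
  calc ∑ p ∈ Finset.univ.filter (fun p : Fin g × Fin g => p.1 ≤ p.2),
        ((if p.1 = p.2 then (2:ℝ)⁻¹ else 1) * (F p.1 p.2 + F p.2 p.1))
      = ∑ p ∈ Finset.univ.filter (fun p : Fin g × Fin g => p.1 = p.2),
          ((if p.1 = p.2 then (2:ℝ)⁻¹ else 1) * (F p.1 p.2 + F p.2 p.1))
        + ∑ p ∈ Finset.univ.filter (fun p : Fin g × Fin g => p.1 < p.2),
          ((if p.1 = p.2 then (2:ℝ)⁻¹ else 1) * (F p.1 p.2 + F p.2 p.1)) := by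
        rw [hsplit, Finset.sum_union hdisj]
    _ = ∑ p ∈ Finset.univ.filter (fun p : Fin g × Fin g => p.1 = p.2), F p.1 p.2
        + (∑ p ∈ Finset.univ.filter (fun p : Fin g × Fin g => p.1 < p.2), F p.1 p.2
           + ∑ p ∈ Finset.univ.filter (fun p : Fin g × Fin g => p.1 < p.2), F p.2 p.1) := by
        rw [← Finset.sum_add_distrib]
        congr 1
        · refine Finset.sum_congr rfl fun p hp => ?_
          simp only [mem_filter] at hp
          rw [if_pos hp.2, ← hp.2]
          ring
        · refine Finset.sum_congr rfl fun p hp => ?_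
          simp only [mem_filter] at hp
          rw [if_neg hp.2.ne]
          ring
    _ = ∑ p ∈ Finset.univ.filter (fun p : Fin g × Fin g => p.1 ≤ p.2), F p.1 p.2
        + ∑ p ∈ Finset.univ.filter (fun p : Fin g × Fin g => p.2 < p.1), F p.1 p.2 := by
        rw [hswap, hsplit, Finset.sum_union hdisj]
        ring
    _ = ∑ p : Fin g × Fin g, F p.1 p.2 := by
        rw [← Finset.sum_filter_add_sum_filter_not Finset.univ
          (fun p : Fin g × Fin g => p.1 ≤ p.2) (fun p => F p.1 p.2)]
        congr 1
        apply Finset.sum_congr _ (fun _ _ => rfl)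
        ext p
        simp [not_le]

theorem Pm_mul
    (hle : ∀ i, f1 i ≤ f2 i)
    (hinj : Function.Injective (fun i => ((f1 i, f2 i) : Fin g × Fin g)))
    (hsurj : ∀ p : Fin g × Fin g, p.1 ≤ p.2 → ∃ i, f1 i = p.1 ∧ f2 i = p.2)
    (A C : Matrix (Fin g) (Fin g) ℝ) :
    Pm f1 f2 (A * C) = Pm f1 f2 A * Pm f1 f2 C := by
  ext i j
  simp only [Pm, Matrix.mul_apply, Matrix.of_apply]
  set F : Fin g → Fin g → ℝ := fun a b =>
    (if f1 i = f2 i then (2:ℝ)⁻¹ else 1) *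
      (A (f1 i) a * A (f2 i) b * (C a (f1 j) * C b (f2 j) + C a (f2 j) * C b (f1 j))) with hF
  have hrhs : ∑ k : Fin M,
      ((if f1 i = f2 i then (2:ℝ)⁻¹ else 1) *
        (A (f1 i) (f1 k) * A (f2 i) (f2 k) + A (f1 i) (f2 k) * A (f2 i) (f1 k)) *
      ((if f1 k = f2 k then (2:ℝ)⁻¹ else 1) *
        (C (f1 k) (f1 j) * C (f2 k) (f2 j) + C (f1 k) (f2 j) * C (f2 k) (f1 j))))
      = ∑ p : Fin g × Fin g, F p.1 p.2 := by
    rw [sum_pairs f1 f2 hle hinj hsurj (fun a b =>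
      (if f1 i = f2 i then (2:ℝ)⁻¹ else 1) *
        (A (f1 i) a * A (f2 i) b + A (f1 i) b * A (f2 i) a) *
      ((if a = b then (2:ℝ)⁻¹ else 1) *
        (C a (f1 j) * C b (f2 j) + C a (f2 j) * C b (f1 j))))]
    rw [← sum_sym F]
    refine Finset.sum_congr rfl fun p _ => ?_
    simp only [hF]
    ring
  rw [hrhs]
  rw [Fintype.sum_prod_type]
  rw [Finset.sum_mul_sum, Finset.sum_mul_sum, ← Finset.sum_add_distrib, Finset.mul_sum]
  refine Finset.sum_congr rfl fun a _ => ?_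
  rw [← Finset.sum_add_distrib, Finset.mul_sum]
  refine Finset.sum_congr rfl fun b _ => ?_
  simp only [hF]
  ring

theorem Pm_diagonal
    (hle : ∀ i, f1 i ≤ f2 i)
    (hinj : Function.Injective (fun i => ((f1 i, f2 i) : Fin g × Fin g)))
    (d : Fin g → ℝ) :
    Pm f1 f2 (Matrix.diagonal d) = Matrix.diagonal (fun i => d (f1 i) * d (f2 i)) := by
  ext i j
  simp only [Pm, Matrix.of_apply, Matrix.diagonal_apply]
  by_cases hij : i = j
  · subst hij
    by_cases h : f1 i = f2 i
    · simp only [if_pos h, if_pos rfl, if_pos h.symm, ← h, if_true]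
      ring
    · simp only [if_neg h, if_pos rfl, if_neg (Ne.symm h), if_true]
      ring
  · rw [if_neg hij]
    have h1 : ¬(f1 i = f1 j ∧ f2 i = f2 j) := by
      rintro ⟨e1, e2⟩
      exact hij (hinj (show (f1 i, f2 i) = (f1 j, f2 j) by rw [e1, e2]))
    have h2 : ¬(f1 i = f2 j ∧ f2 i = f1 j) := by
      rintro ⟨e1, e2⟩
      have k1 : f2 i ≤ f1 i := by
        calc f2 i = f1 j := e2
          _ ≤ f2 j := hle j
          _ = f1 i := e1.symm
      have k2 : f1 i = f2 i := le_antisymm (hle i) k1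
      exact hij (hinj (show (f1 i, f2 i) = (f1 j, f2 j) by
        rw [← k2, e1, show f1 j = f1 i from e2 ▸ k2 ▸ rfl, e1]))
    by_cases e1 : f1 i = f1 j
    · have e2 : ¬ f2 i = f2 j := fun e => h1 ⟨e1, e⟩
      rw [if_pos e1, if_neg e2]
      by_cases e3 : f1 i = f2 j
      · have e4 : ¬ f2 i = f1 j := fun e => h2 ⟨e3, e⟩
        rw [if_pos e3, if_neg e4]; ring
      · rw [if_neg e3]; ring
    · rw [if_neg e1]
      by_cases e3 : f1 i = f2 j
      · have e4 : ¬ f2 i = f1 j := fun e => h2 ⟨e3, e⟩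
        rw [if_pos e3, if_neg e4]; ring
      · rw [if_neg e3]; ring

theorem Pm_one
    (hle : ∀ i, f1 i ≤ f2 i)
    (hinj : Function.Injective (fun i => ((f1 i, f2 i) : Fin g × Fin g))) :
    Pm f1 f2 (1 : Matrix (Fin g) (Fin g) ℝ) = 1 := by
  rw [← Matrix.diagonal_one, Pm_diagonal f1 f2 hle hinj]
  simp

theorem prod_diag_pow
    (hle : ∀ i, f1 i ≤ f2 i)
    (hinj : Function.Injective (fun i => ((f1 i, f2 i) : Fin g × Fin g)))
    (hsurj : ∀ p : Fin g × Fin g, p.1 ≤ p.2 → ∃ i, f1 i = p.1 ∧ f2 i = p.2)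
    (d : Fin g → ℝ) (hd : ∀ a, 0 < d a) :
    ∏ i : Fin M, (d (f1 i) * d (f2 i)) = (∏ a, d a) ^ (g + 1) := by
  have hL : ∏ i : Fin M, (d (f1 i) * d (f2 i))
      = ∏ p ∈ Finset.univ.filter (fun p : Fin g × Fin g => p.1 ≤ p.2), d p.1 * d p.2 :=
    prod_pairs f1 f2 hle hinj hsurj (fun a b => d a * d b)
  have hswap : ∏ p ∈ Finset.univ.filter (fun p : Fin g × Fin g => p.2 ≤ p.1), (d p.1 * d p.2)
      = ∏ p ∈ Finset.univ.filter (fun p : Fin g × Fin g => p.1 ≤ p.2), (d p.1 * d p.2) := by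
    refine Finset.prod_nbij' Prod.swap Prod.swap ?_ ?_ ?_ ?_ ?_ <;> simp [mul_comm]
  have hunion : (Finset.univ.filter (fun p : Fin g × Fin g => p.1 ≤ p.2))
      ∪ (Finset.univ.filter (fun p : Fin g × Fin g => p.2 ≤ p.1)) = Finset.univ := by
    ext p; simp [le_total]
  have hinter : (Finset.univ.filter (fun p : Fin g × Fin g => p.1 ≤ p.2))
      ∩ (Finset.univ.filter (fun p : Fin g × Fin g => p.2 ≤ p.1))
      = Finset.univ.filter (fun p : Fin g × Fin g => p.1 = p.2) := by
    ext p
    simp only [Finset.mem_inter, mem_filter, mem_univ, true_and]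
    constructor
    · rintro ⟨a, b⟩; exact le_antisymm a b
    · rintro a; exact ⟨a.le, a.ge⟩
  have hdiagprod : ∏ p ∈ Finset.univ.filter (fun p : Fin g × Fin g => p.1 = p.2),
      (d p.1 * d p.2) = ∏ a : Fin g, (d a * d a) := by
    refine (Finset.prod_nbij (fun a : Fin g => ((a, a) : Fin g × Fin g))
      (fun a _ => by simp) (fun a _ b _ hab => by simpa using congrArg Prod.fst hab)
      ?_ (fun a _ => rfl)).symm
    intro p hp
    simp only [coe_filter, Set.mem_setOf_eq, mem_univ, true_and] at hp
    exact ⟨p.1, by simp, by simp [Prod.ext_iff, hp]⟩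
  have hall : ∏ p : Fin g × Fin g, (d p.1 * d p.2) = (∏ a, d a) ^ (2 * g) := by
    rw [Fintype.prod_prod_type]
    calc ∏ a : Fin g, ∏ b : Fin g, (d a * d b)
        = ∏ a : Fin g, (d a ^ g * ∏ b, d b) := by
          refine Finset.prod_congr rfl fun a _ => ?_
          rw [Finset.prod_mul_distrib, Finset.prod_const, card_univ, Fintype.card_fin]
      _ = (∏ a, d a) ^ g * (∏ a, d a) ^ g := by
          rw [Finset.prod_mul_distrib, Finset.prod_pow, Finset.prod_const, card_univ,
            Fintype.card_fin]
      _ = (∏ a, d a) ^ (2 * g) := by ring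
  have hsq : (∏ p ∈ Finset.univ.filter (fun p : Fin g × Fin g => p.1 ≤ p.2),
      (d p.1 * d p.2)) ^ 2 = ((∏ a, d a) ^ (g + 1)) ^ 2 := by
    calc (∏ p ∈ Finset.univ.filter (fun p : Fin g × Fin g => p.1 ≤ p.2),
          (d p.1 * d p.2)) ^ 2
        = (∏ p ∈ Finset.univ.filter (fun p : Fin g × Fin g => p.1 ≤ p.2), (d p.1 * d p.2))
          * ∏ p ∈ Finset.univ.filter (fun p : Fin g × Fin g => p.2 ≤ p.1), (d p.1 * d p.2) := by
          rw [hswap]; ring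
      _ = (∏ p : Fin g × Fin g, (d p.1 * d p.2))
          * ∏ p ∈ Finset.univ.filter (fun p : Fin g × Fin g => p.1 = p.2), (d p.1 * d p.2) := by
          rw [← Finset.prod_union_inter, hunion, hinter]
      _ = (∏ a, d a) ^ (2 * g) * ∏ a : Fin g, (d a * d a) := by rw [hall, hdiagprod]
      _ = ((∏ a, d a) ^ (g + 1)) ^ 2 := by
          rw [show ∏ a : Fin g, (d a * d a) = (∏ a, d a) * (∏ a, d a) from
            Finset.prod_mul_distrib]
          ring
  have hpos1 : 0 < ∏ p ∈ Finset.univ.filter (fun p : Fin g × Fin g => p.1 ≤ p.2),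
      (d p.1 * d p.2) := Finset.prod_pos fun p _ => mul_pos (hd _) (hd _)
  have hpos2 : 0 < (∏ a, d a) ^ (g + 1) :=
    pow_pos (Finset.prod_pos fun a _ => hd a) _
  rw [hL]
  exact (sq_eq_sq₀ hpos1.le hpos2.le).mp hsq

theorem card_diag
    (hinj : Function.Injective (fun i => ((f1 i, f2 i) : Fin g × Fin g)))
    (hsurj : ∀ p : Fin g × Fin g, p.1 ≤ p.2 → ∃ i, f1 i = p.1 ∧ f2 i = p.2) :
    (Finset.univ.filter fun j : Fin M => f1 j = f2 j).card = g := by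
  have key : (Finset.univ.filter fun j : Fin M => f1 j = f2 j).card
      = (Finset.univ : Finset (Fin g)).card := by
    refine Finset.card_nbij (fun j => f1 j) (fun j _ => Finset.mem_univ _) ?_ ?_
    · intro a ha b hb hab
      simp only [coe_filter, Set.mem_setOf_eq] at ha hb
      have hab' : f1 a = f1 b := hab
      exact hinj (show (f1 a, f2 a) = (f1 b, f2 b) by
        rw [← ha.2, ← hb.2, hab'])
    · intro a _
      obtain ⟨i, h1, h2⟩ := hsurj (a, a) le_rfl
      exact ⟨i, by simp [h1, h2, h1.trans h2.symm], h1⟩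
  rw [key, Finset.card_univ, Fintype.card_fin]

theorem prod_two
    (hinj : Function.Injective (fun i => ((f1 i, f2 i) : Fin g × Fin g)))
    (hsurj : ∀ p : Fin g × Fin g, p.1 ≤ p.2 → ∃ i, f1 i = p.1 ∧ f2 i = p.2) :
    ∏ j : Fin M, (if f1 j = f2 j then (1:ℝ) else 2) = 2 ^ (M - g) := by
  rw [Finset.prod_ite, Finset.prod_const, Finset.prod_const, one_pow, one_mul]
  congr 1
  have htot := Finset.card_filter_add_card_filter_not
    (s := (Finset.univ : Finset (Fin M))) (p := fun j => f1 j = f2 j)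
  rw [card_diag f1 f2 hinj hsurj, Finset.card_univ, Fintype.card_fin] at htot
  omega

end

end SiegelDetAux

/-- Determinant of the Siegel metric coefficient matrix.  Let `Y` be a real symmetric
positive-definite `g×g` matrix, `M = g(g+1)/2`, and `g^S_{ij} = 2 χᵢ⁻¹ χⱼ⁻¹ (Y⁻¹·Y⁻¹)_{ij}`
with the symmetric-pair indexing `i ↦ (𝔣1ᵢ, 𝔣2ᵢ)` of pairs `1 ≤ a ≤ b ≤ g` and
`χᵢ = 1 + δ_{𝔣1ᵢ𝔣2ᵢ}`.  Then `det g^S = 2^{M-g} / (det Y)^{g+1}`. -/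
theorem det_siegel_metric (g M : ℕ) (hM : M = g * (g + 1) / 2)
    (f1 f2 : Fin M → Fin g)
    (hle : ∀ i, f1 i ≤ f2 i)
    (hinj : Function.Injective (fun i => ((f1 i, f2 i) : Fin g × Fin g)))
    (hsurj : ∀ p : Fin g × Fin g, p.1 ≤ p.2 → ∃ i, f1 i = p.1 ∧ f2 i = p.2)
    (Y : Matrix (Fin g) (Fin g) ℝ) (hY : Y.PosDef) :
    Matrix.det (Matrix.of fun i j : Fin M =>
        2 * (if f1 i = f2 i then (2 : ℝ)⁻¹ else 1) * (if f1 j = f2 j then (2 : ℝ)⁻¹ else 1) *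
          (Y⁻¹ (f1 i) (f1 j) * Y⁻¹ (f2 i) (f2 j) + Y⁻¹ (f1 i) (f2 j) * Y⁻¹ (f2 i) (f1 j))) =
      2 ^ (M - g) / Y.det ^ (g + 1) := by
  classical
  have hBpd : (Y⁻¹).PosDef := hY.inv
  have hBH : (Y⁻¹).IsHermitian := hBpd.1
  -- rewrite the matrix as Pm Y⁻¹ * diagonal weight
  have hG : (Matrix.of fun i j : Fin M =>
        2 * (if f1 i = f2 i then (2 : ℝ)⁻¹ else 1) * (if f1 j = f2 j then (2 : ℝ)⁻¹ else 1) *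
          (Y⁻¹ (f1 i) (f1 j) * Y⁻¹ (f2 i) (f2 j) + Y⁻¹ (f1 i) (f2 j) * Y⁻¹ (f2 i) (f1 j)))
      = SiegelDetAux.Pm f1 f2 Y⁻¹
        * Matrix.diagonal (fun j => if f1 j = f2 j then (1:ℝ) else 2) := by
    ext i j
    rw [Matrix.mul_diagonal]
    simp only [SiegelDetAux.Pm, Matrix.of_apply]
    by_cases h : f1 j = f2 j
    · simp only [if_pos h]; ring
    · simp only [if_neg h]; ring
  rw [hG, Matrix.det_mul, Matrix.det_diagonal,
    SiegelDetAux.prod_two f1 f2 hinj hsurj]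
  -- compute det (Pm Y⁻¹) via the spectral theorem
  have hspec := hBH.spectral_theorem
  set U : Matrix (Fin g) (Fin g) ℝ := (hBH.eigenvectorUnitary : Matrix (Fin g) (Fin g) ℝ)
    with hU
  have hdiagfun : (RCLike.ofReal ∘ hBH.eigenvalues : Fin g → ℝ) = hBH.eigenvalues := by
    funext a; simp [RCLike.ofReal_real_eq_id]
  rw [hdiagfun] at hspec
  have hUU : U * star U = 1 :=
    Matrix.mem_unitaryGroup_iff.mp hBH.eigenvectorUnitary.2
  have hdet : (SiegelDetAux.Pm f1 f2 Y⁻¹).det = (Y⁻¹).det ^ (g + 1) := by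
    rw [show SiegelDetAux.Pm f1 f2 Y⁻¹
        = SiegelDetAux.Pm f1 f2 (U * Matrix.diagonal hBH.eigenvalues * star U) by rw [Unitary.conjStarAlgAut_apply] at hspec; rw [← hspec]]
    rw [SiegelDetAux.Pm_mul f1 f2 hle hinj hsurj,
      SiegelDetAux.Pm_mul f1 f2 hle hinj hsurj,
      Matrix.det_mul, Matrix.det_mul]
    have hUdet : (SiegelDetAux.Pm f1 f2 U).det * (SiegelDetAux.Pm f1 f2 (star U)).det = 1 := by
      rw [← Matrix.det_mul, ← SiegelDetAux.Pm_mul f1 f2 hle hinj hsurj, hUU,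
        SiegelDetAux.Pm_one f1 f2 hle hinj, Matrix.det_one]
    rw [SiegelDetAux.Pm_diagonal f1 f2 hle hinj, Matrix.det_diagonal,
      SiegelDetAux.prod_diag_pow f1 f2 hle hinj hsurj hBH.eigenvalues hBpd.eigenvalues_pos]
    have hdetB : (Y⁻¹).det = ∏ a, hBH.eigenvalues a := by
      have := hBH.det_eq_prod_eigenvalues
      simpa using this
    rw [hdetB]
    calc (SiegelDetAux.Pm f1 f2 U).det * (∏ a, hBH.eigenvalues a) ^ (g + 1)
          * (SiegelDetAux.Pm f1 f2 (star U)).det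
        = ((SiegelDetAux.Pm f1 f2 U).det * (SiegelDetAux.Pm f1 f2 (star U)).det)
          * (∏ a, hBH.eigenvalues a) ^ (g + 1) := by ring
      _ = (∏ a, hBH.eigenvalues a) ^ (g + 1) := by rw [hUdet, one_mul]
  rw [hdet]
  have hYdet : (0:ℝ) < Y.det := hY.det_pos
  have hinv : (Y⁻¹).det = (Y.det)⁻¹ := by
    rw [Matrix.det_nonsing_inv, Ring.inverse_eq_inv']
  rw [hinv, inv_pow]
  field_simp
end

section
/- Let A, B, C be symmetric g×g matrices over a commutative ring in which 2 is invertible. Then Tr(A B A C) = Σ_{m,n ∈ I_M} 2 χ_m⁻¹ χ_n⁻¹ (A·A)_{nm} B_{𝔣1_m 𝔣2_m} C_{𝔣1_n 𝔣2_n}, where I_M indexes pairs 1 ≤ a ≤ b ≤ g, (A·A)_{nm} := A_{𝔣1_n 𝔣1_m} A_{𝔣2_n 𝔣2_m} + A_{𝔣1_n 𝔣2_m} A_{𝔣2_n 𝔣1_m}, and χ_m := 1 + δ_{𝔣1_m 𝔣2_m}. -/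
open Finset

theorem key {R : Type*} [CommRing R] [Invertible (2 : R)] {g M : ℕ} {f1 f2 : Fin M → Fin g}
    (hle : ∀ i, f1 i ≤ f2 i)
    (hinj : Function.Injective (fun i => ((f1 i, f2 i) : Fin g × Fin g)))
    (hsurj : ∀ p : Fin g × Fin g, p.1 ≤ p.2 → ∃ i, f1 i = p.1 ∧ f2 i = p.2)
    (K : Fin g → Fin g → R) :
    (∑ a, ∑ b, K a b) =
      ∑ n : Fin M, (if f1 n = f2 n then ⅟(2:R) else 1) * (K (f1 n) (f2 n) + K (f2 n) (f1 n)) := by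
  have hstep1 : ∀ F : Fin g × Fin g → R,
      (∑ n : Fin M, F (f1 n, f2 n)) =
        ∑ p ∈ univ.filter (fun p : Fin g × Fin g => p.1 ≤ p.2), F p := by
    intro F
    refine Finset.sum_bij (fun n _ => (f1 n, f2 n)) ?_ ?_ ?_ ?_
    · intro n _; simp [hle n]
    · intro a _ b _ h; exact hinj h
    · intro p hp
      obtain ⟨i, h1, h2⟩ := hsurj p (by simpa using hp)
      exact ⟨i, mem_univ i, by simp [h1, h2]⟩
    · intro n _; rfl
  rw [show (∑ n : Fin M, (if f1 n = f2 n then ⅟(2:R) else 1) * (K (f1 n) (f2 n) + K (f2 n) (f1 n)))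
      = ∑ p ∈ univ.filter (fun p : Fin g × Fin g => p.1 ≤ p.2),
          (if p.1 = p.2 then ⅟(2:R) else 1) * (K p.1 p.2 + K p.2 p.1) from
    hstep1 (fun p => (if p.1 = p.2 then ⅟(2:R) else 1) * (K p.1 p.2 + K p.2 p.1))]
  rw [← Finset.sum_filter_add_sum_filter_not (univ.filter (fun p : Fin g × Fin g => p.1 ≤ p.2))
      (fun p => p.1 = p.2)]
  have hdiag : (univ.filter (fun p : Fin g × Fin g => p.1 ≤ p.2)).filter (fun p => p.1 = p.2)
      = univ.filter (fun p : Fin g × Fin g => p.1 = p.2) := by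
    ext p; simp +contextual [le_of_eq]
  have hlt : (univ.filter (fun p : Fin g × Fin g => p.1 ≤ p.2)).filter (fun p => ¬ p.1 = p.2)
      = univ.filter (fun p : Fin g × Fin g => p.1 < p.2) := by
    ext p; simp [lt_iff_le_and_ne, and_comm]
  rw [hdiag, hlt]
  have hd : ∑ p ∈ univ.filter (fun p : Fin g × Fin g => p.1 = p.2),
      (if p.1 = p.2 then ⅟(2:R) else 1) * (K p.1 p.2 + K p.2 p.1)
      = ∑ p ∈ univ.filter (fun p : Fin g × Fin g => p.1 = p.2), K p.1 p.2 := by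
    refine Finset.sum_congr rfl ?_
    intro p hp
    simp only [mem_filter] at hp
    rw [if_pos hp.2, hp.2]
    rw [show K p.2 p.2 + K p.2 p.2 = 2 * K p.2 p.2 by ring, ← mul_assoc, invOf_mul_self, one_mul]
  have hl : ∑ p ∈ univ.filter (fun p : Fin g × Fin g => p.1 < p.2),
      (if p.1 = p.2 then ⅟(2:R) else 1) * (K p.1 p.2 + K p.2 p.1)
      = ∑ p ∈ univ.filter (fun p : Fin g × Fin g => p.1 < p.2), (K p.1 p.2 + K p.2 p.1) := by
    refine Finset.sum_congr rfl ?_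
    intro p hp
    simp only [mem_filter] at hp
    rw [if_neg (ne_of_lt hp.2), one_mul]
  rw [hd, hl]
  -- LHS
  rw [← Fintype.sum_prod_type']
  rw [← Finset.sum_filter_add_sum_filter_not (univ : Finset (Fin g × Fin g)) (fun p => p.1 ≤ p.2)
      (fun p => K p.1 p.2)]
  have h1 : (univ : Finset (Fin g × Fin g)).filter (fun p => p.1 ≤ p.2)
      = univ.filter (fun p : Fin g × Fin g => p.1 = p.2) ∪ univ.filter (fun p : Fin g × Fin g => p.1 < p.2) := by
    ext p; simp [le_iff_lt_or_eq, or_comm]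
  have hdisj : Disjoint (univ.filter (fun p : Fin g × Fin g => p.1 = p.2))
      (univ.filter (fun p : Fin g × Fin g => p.1 < p.2)) :=
    Finset.disjoint_filter.mpr (fun p _ h1 h2 => absurd h1 (ne_of_lt h2))
  rw [h1, Finset.sum_union hdisj]
  have hswap : ∑ p ∈ univ.filter (fun p : Fin g × Fin g => ¬ p.1 ≤ p.2), K p.1 p.2
      = ∑ p ∈ univ.filter (fun p : Fin g × Fin g => p.1 < p.2), K p.2 p.1 := by
    refine Finset.sum_nbij' (fun p => p.swap) (fun p => p.swap) ?_ ?_ ?_ ?_ ?_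
    · intro p hp; simp only [mem_filter, mem_univ, true_and] at hp ⊢
      exact lt_of_not_ge hp
    · intro p hp; simp only [mem_filter, mem_univ, true_and] at hp ⊢
      exact not_le_of_gt hp
    · intro p _; simp
    · intro p _; simp
    · intro p _; rfl
  rw [hswap, Finset.sum_add_distrib]
  ring

/-- For symmetric `g×g` matrices `A, B, C` over a commutative ring in which `2` is invertible,
`Tr(ABAC) = Σ_{m,n} 2 χₘ⁻¹ χₙ⁻¹ (A·A)_{nm} B_{𝔣1ₘ𝔣2ₘ} C_{𝔣1ₙ𝔣2ₙ}`, where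
`m ↦ (𝔣1ₘ, 𝔣2ₘ)` enumerates the pairs `1 ≤ a ≤ b ≤ g`,
`(A·A)_{nm} = A_{𝔣1ₙ𝔣1ₘ}A_{𝔣2ₙ𝔣2ₘ} + A_{𝔣1ₙ𝔣2ₘ}A_{𝔣2ₙ𝔣1ₘ}`, and `χₘ = 1 + δ_{𝔣1ₘ𝔣2ₘ}`. -/
theorem trace_ABAC_eq_symSq_sum (R : Type*) [CommRing R] [Invertible (2 : R)]
    (g M : ℕ) (f1 f2 : Fin M → Fin g)
    (hle : ∀ i, f1 i ≤ f2 i)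
    (hinj : Function.Injective (fun i => ((f1 i, f2 i) : Fin g × Fin g)))
    (hsurj : ∀ p : Fin g × Fin g, p.1 ≤ p.2 → ∃ i, f1 i = p.1 ∧ f2 i = p.2)
    (A B C : Matrix (Fin g) (Fin g) R)
    (hA : A.IsSymm) (hB : B.IsSymm) (hC : C.IsSymm) :
    Matrix.trace (A * B * A * C) =
      ∑ m : Fin M, ∑ n : Fin M,
        2 * (if f1 m = f2 m then ⅟(2 : R) else 1) * (if f1 n = f2 n then ⅟(2 : R) else 1) *
          (A (f1 n) (f1 m) * A (f2 n) (f2 m) + A (f1 n) (f2 m) * A (f2 n) (f1 m)) *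
          B (f1 m) (f2 m) * C (f1 n) (f2 n) := by
  have h0 : Matrix.trace (A * B * A * C) =
      ∑ i : Fin g, ∑ l : Fin g, ∑ k : Fin g, ∑ j : Fin g,
        ((A i j * B j k) * A k l) * C l i := by
    simp only [Matrix.trace, Matrix.diag_apply, Matrix.mul_apply, Finset.sum_mul]
  rw [h0]
  rw [key hle hinj hsurj (fun a b => ∑ k, ∑ j, ((A a j * B j k) * A k b) * C b a)]
  have h2 : ∀ a b : Fin g, (∑ k, ∑ j, ((A a j * B j k) * A k b) * C b a)
      = ∑ m : Fin M, (if f1 m = f2 m then ⅟(2:R) else 1) *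
          (((A a (f2 m) * B (f2 m) (f1 m)) * A (f1 m) b) * C b a +
           ((A a (f1 m) * B (f1 m) (f2 m)) * A (f2 m) b) * C b a) :=
    fun a b => key hle hinj hsurj (fun k j => ((A a j * B j k) * A k b) * C b a)
  simp only [h2]
  simp only [← Finset.sum_add_distrib, Finset.mul_sum]
  rw [Finset.sum_comm]
  refine Finset.sum_congr rfl fun m _ => Finset.sum_congr rfl fun n _ => ?_
  rw [hB.apply (f1 m) (f2 m), hC.apply (f1 n) (f2 n), hA.apply (f2 n) (f1 m),
    hA.apply (f2 n) (f2 m), hA.apply (f1 n) (f1 m), hA.apply (f1 n) (f2 m)]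
  ring
end
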